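/- The map f : ℂ × {z : Re(z) < 0} → ℍ × ℂ, f(z₁,z₂) = (−iz₂, iz₁), where ℍ = {τ : Im(τ) > 0}, is a biholomorphism, and it pulls back the Kähler–Berndt metric g_{KB} = ½g_{1,1} on ℍ × ℂ to the metric on ℂ × iℍ whose matrix in coordinates (θ₁,θ₂,θ̇₁,θ̇₂) (with z₁ = θ₁ + iθ̇₁, z₂ = θ₂ + iθ̇₂) is block-diagonal diag(h_F(θ), h_F(θ)), where h_F(θ) is the 2×2 matrix with entries h₁₁ = −1/(2θ₂), h₁₂ = θ₁/(2θ₂²), h₂₂ = (θ₂ − θ₁²)/(2θ₂³). -/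

import Mathlib

open Complex

/-- The map `f(z₁,z₂) = (−iz₂, iz₁)` from `ℂ × iℍ` to `ℍ × ℂ`. -/
noncomputable def fSJ (p : ℂ × ℂ) : ℂ × ℂ := (-I * p.2, I * p.1)

/-- The Kähler–Berndt metric `g_KB = ½ g_{1,1}` on `ℍ × ℂ`, as a bilinear form
on `ℝ⁴` at the point with real coordinates `(u,v,x,y)` (`τ = u+iv`, `z = x+iy`):
`g_uu = g_vv = (v+y²)/v³`, `g_xx = g_yy = 1/v`, `g_ux = g_vy = −y/v²`,
all multiplied by `½`. -/
noncomputable def gKB (u v x y : ℝ) (P Q : Fin 4 → ℝ) : ℝ :=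
  (1 / 2) * (((v + y ^ 2) / v ^ 3) * (P 0 * Q 0 + P 1 * Q 1)
    + (1 / v) * (P 2 * Q 2 + P 3 * Q 3)
    + (-y / v ^ 2) * (P 0 * Q 2 + P 2 * Q 0 + P 1 * Q 3 + P 3 * Q 1))

/-- The block-diagonal metric `diag(h_F(θ), h_F(θ))` on `ℂ × iℍ` in the
coordinates `(θ₁,θ₂,θ̇₁,θ̇₂)`, with `h₁₁ = −1/(2θ₂)`, `h₁₂ = θ₁/(2θ₂²)`,
`h₂₂ = (θ₂−θ₁²)/(2θ₂³)`. -/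
noncomputable def gdiag (θ₁ θ₂ : ℝ) (P Q : Fin 4 → ℝ) : ℝ :=
  (-1 / (2 * θ₂)) * (P 0 * Q 0 + P 2 * Q 2)
  + (θ₁ / (2 * θ₂ ^ 2)) * (P 0 * Q 1 + P 1 * Q 0 + P 2 * Q 3 + P 3 * Q 2)
  + ((θ₂ - θ₁ ^ 2) / (2 * θ₂ ^ 3)) * (P 1 * Q 1 + P 3 * Q 3)

/-- The (linear) map `f` written in the real coordinates
`(θ₁,θ₂,θ̇₁,θ̇₂) ↦ (u,v,x,y) = (θ̇₂, −θ₂, −θ̇₁, θ₁)`; it is its own derivative. -/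
def dfSJ (P : Fin 4 → ℝ) : Fin 4 → ℝ := ![P 3, -(P 1), -(P 2), P 0]

/-
Multiplication by `∓i` rotates the left half-plane `Re z < 0` onto `ℍ` and back, and `f ∘ f = id`
(since `-i · i = 1`), so `f` is a holomorphic bijection that is its own inverse. As `f` is
real-linear, the pullback metric is a rational identity in `θ₁, θ₂` alone.
-/

theorem fSJ_involutive : Function.Involutive fSJ := by
  rintro ⟨z₁, z₂⟩
  ext <;> simp [fSJ, ← mul_assoc]

theorem differentiable_fSJ : Differentiable ℂ fSJ :=
  (differentiable_snd.const_mul _).prodMk (differentiable_fst.const_mul _)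

theorem mapsTo_fSJ_upperHalfPlane :
    Set.MapsTo fSJ (Set.univ ×ˢ {z : ℂ | z.re < 0}) ({τ : ℂ | 0 < τ.im} ×ˢ Set.univ) := by
  rintro ⟨z₁, z₂⟩ ⟨-, hz₂⟩
  exact ⟨by simpa [fSJ] using hz₂, trivial⟩

theorem mapsTo_fSJ_leftHalfPlane :
    Set.MapsTo fSJ ({τ : ℂ | 0 < τ.im} ×ˢ Set.univ) (Set.univ ×ˢ {z : ℂ | z.re < 0}) := by
  rintro ⟨τ, z⟩ ⟨hτ, -⟩
  exact ⟨trivial, by simpa [fSJ] using hτ⟩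

theorem bijOn_fSJ :
    Set.BijOn fSJ (Set.univ ×ˢ {z : ℂ | z.re < 0}) ({τ : ℂ | 0 < τ.im} ×ˢ Set.univ) :=
  Set.InvOn.bijOn ⟨fun p _ ↦ fSJ_involutive p, fun p _ ↦ fSJ_involutive p⟩
    mapsTo_fSJ_upperHalfPlane mapsTo_fSJ_leftHalfPlane

theorem gKB_dfSJ {θ₂ : ℝ} (hθ₂ : θ₂ ≠ 0) (θ₁ t₁ t₂ : ℝ) (P Q : Fin 4 → ℝ) :
    gKB t₂ (-θ₂) (-t₁) θ₁ (dfSJ P) (dfSJ Q) = gdiag θ₁ θ₂ P Q := by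
  simp only [gKB, gdiag, dfSJ, Matrix.cons_val]
  field_simp
  ring

/-- `f(z₁,z₂) = (−iz₂, iz₁)` is a biholomorphism from
`ℂ × iℍ` onto `ℍ × ℂ`, and it pulls back the Kähler–Berndt metric `½ g_{1,1}`
to the block-diagonal metric `diag(h_F, h_F)`. -/
theorem stmt14 :
    Differentiable ℂ fSJ ∧
    Set.BijOn fSJ (Set.univ ×ˢ {z : ℂ | z.re < 0}) ({τ : ℂ | 0 < τ.im} ×ˢ Set.univ) ∧
    ∀ θ₁ θ₂ t₁ t₂ : ℝ, θ₂ < 0 → ∀ P Q : Fin 4 → ℝ,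
      gKB t₂ (-θ₂) (-t₁) θ₁ (dfSJ P) (dfSJ Q) = gdiag θ₁ θ₂ P Q :=
  ⟨differentiable_fSJ, bijOn_fSJ, fun θ₁ _ t₁ t₂ hθ₂ ↦ gKB_dfSJ hθ₂.ne θ₁ t₁ t₂⟩
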